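/- arXiv:2510.02420 — 3 statements merged into one kernel-verified Lean document; each statement's English description precedes it below -/
import Mathlib

section
/- Boundedness of VC_k-dimension is preserved under Boolean combinations: if F and G are families of subsets of V1 × ... × Vk with VC_k(F) ≤ d and VC_k(G) ≤ d, then the family {S ∩ T : S ∈ F, T ∈ G} has VC_k-dimension bounded by a function of d and k alone. In particular it is finite whenever d is finite. -/
universe u

def pibox {ι : Type*} {V : ι → Type*} (A : ∀ i, Set (V i)) : Set (∀ i, V i) :=
  {x | ∀ i, x i ∈ A i}

def ShattersBox {ι : Type*} {V : ι → Type*} (F : Set (Set (∀ i, V i)))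
    (A : ∀ i, Set (V i)) : Prop :=
  ∀ B ⊆ pibox A, ∃ S ∈ F, B = pibox A ∩ S

def VCge {ι : Type*} {V : ι → Type*} (F : Set (Set (∀ i, V i))) (d : ℕ) : Prop :=
  ∃ A : ∀ i, Set (V i), (∀ i, (A i).Finite ∧ (A i).ncard = d) ∧ ShattersBox F A

/-- `F` has `VC_k`-dimension at most `d`: no `(d+1)`-box is shattered by `F`. -/
def VCle {ι : Type*} {V : ι → Type*} (F : Set (Set (∀ i, V i))) (d : ℕ) : Prop :=
  ¬ VCge F (d + 1)

open Finset

namespace VCproof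

def boxes (e k n : ℕ) (X : Finset (Fin k → Fin n)) : Finset (Fin k → Finset (Fin n)) :=
  Finset.univ.filter (fun E => (∀ i, (E i).card = e) ∧
    ∀ x : Fin k → Fin n, (∀ i, x i ∈ E i) → x ∈ X)

lemma mem_boxes {e k n : ℕ} {X : Finset (Fin k → Fin n)} {E : Fin k → Finset (Fin n)} :
    E ∈ boxes e k n X ↔ (∀ i, (E i).card = e) ∧
      ∀ x : Fin k → Fin n, (∀ i, x i ∈ E i) → x ∈ X := by
  simp [boxes]

/-- `k^k ≤ 3^k k!`-free crude bound: `a * (M+1)^b ≤ 2^M` for large `M`. -/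
lemma poly_le_exp (a b : ℕ) : ∃ M₀ : ℕ, ∀ M, M₀ ≤ M → a * (M + 1) ^ b ≤ 2 ^ M := by
  refine ⟨(b+1).factorial * a * 2 ^ b + 2 * b + 1, fun M hM => ?_⟩
  set c := (b+1).factorial * a with hc
  have hM1 : 2 * b + 1 ≤ M := by omega
  have hMb : c * 2 ^ b + b + 1 ≤ M := by omega
  -- step 1 : c * (M+1)^b ≤ (M - b)^(b+1)
  have h1 : M + 1 ≤ 2 * (M - b) := by omega
  have h2 : (M + 1) ^ b ≤ 2 ^ b * (M - b) ^ b := by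
    calc (M + 1) ^ b ≤ (2 * (M - b)) ^ b := Nat.pow_le_pow_left h1 b
    _ = 2 ^ b * (M - b) ^ b := by rw [mul_pow]
  have h3 : c * (M + 1) ^ b ≤ (M - b) ^ (b + 1) := by
    calc c * (M + 1) ^ b ≤ c * (2 ^ b * (M - b) ^ b) := Nat.mul_le_mul_left c h2
    _ = (c * 2 ^ b) * (M - b) ^ b := by ring
    _ ≤ (M - b) * (M - b) ^ b := by
        refine Nat.mul_le_mul_right _ ?_
        omega
    _ = (M - b) ^ (b + 1) := by rw [pow_succ, mul_comm]
  -- step 2 : (M - b)^(b+1) ≤ (b+1)! * choose M (b+1)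
  have h4 : (M - b) ^ (b + 1) ≤ (b + 1).factorial * M.choose (b + 1) := by
    have := Nat.pow_sub_le_descFactorial M (b + 1)
    have heq := Nat.descFactorial_eq_factorial_mul_choose M (b + 1)
    calc (M - b) ^ (b + 1) = (M + 1 - (b + 1)) ^ (b + 1) := by
          congr 1
          omega
    _ ≤ M.descFactorial (b + 1) := this
    _ = (b + 1).factorial * M.choose (b + 1) := heq
  -- step 3 : choose M (b+1) ≤ 2 ^ M
  have h5 : M.choose (b + 1) ≤ 2 ^ M := by
    calc M.choose (b + 1) ≤ ∑ i ∈ Finset.range (M + 1), M.choose i := by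
          refine Finset.single_le_sum (f := fun i => M.choose i) (fun i _ => Nat.zero_le _) ?_
          simp only [Finset.mem_range]
          omega
    _ = 2 ^ M := Nat.sum_range_choose M
  -- combine
  have h6 : (b + 1).factorial * (a * (M + 1) ^ b) ≤ (b + 1).factorial * M.choose (b + 1) := by
    calc (b + 1).factorial * (a * (M + 1) ^ b) = c * (M + 1) ^ b := by rw [hc]; ring
    _ ≤ (M - b) ^ (b + 1) := h3
    _ ≤ (b + 1).factorial * M.choose (b + 1) := h4
  have h7 : a * (M + 1) ^ b ≤ M.choose (b + 1) :=
    Nat.le_of_mul_le_mul_left h6 (Nat.factorial_pos _)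
  exact h7.trans h5

/-- the final tail-count inequality. -/
lemma tail_bound (N m t₀ : ℕ) (hN : 1 ≤ N) (hm : N + 1 ≤ 2 ^ m)
    (ht₀ : t₀ = N / (4 * m + 4) + 1) (hcase : N < 4 * m + 4 ∨ 8 * m + 8 ≤ N) :
    (t₀ * (N + 1) ^ (t₀ - 1)) ^ 2 < 2 ^ N := by
  rcases hcase with h | h
  · have : N / (4 * m + 4) = 0 := Nat.div_eq_of_lt h
    rw [ht₀, this]
    simpa using Nat.one_lt_two_pow (by omega)
  · set P := 4 * m + 4 with hP
    have hm1 : 1 ≤ m := by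
      rcases Nat.eq_zero_or_pos m with h0 | h0
      · subst h0
        norm_num at hm
        omega
      · exact h0
    have hqN : N / P ≤ N := Nat.div_le_self _ _
    set q := N / P with hqdef
    clear_value q
    have ht1 : 1 ≤ t₀ := by omega
    have htN : t₀ ≤ N + 1 := by omega
    have key : 2 * m * t₀ < N := by
      have hA : 4 * m * q ≤ N := by
        have h1 : 4 * m * q ≤ P * q := Nat.mul_le_mul_right q (by omega)
        have h2 : P * q ≤ N := by
          rw [hqdef, mul_comm]
          exact Nat.div_mul_le_self N P
        omega
      have hhalf : 2 * m * q ≤ N / 2 := by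
        refine (Nat.le_div_iff_mul_le (by omega)).2 ?_
        calc 2 * m * q * 2 = 4 * m * q := by ring
        _ ≤ N := hA
      have h2m : 2 * m < N / 2 := by
        have : (8 * m + 8) / 2 ≤ N / 2 := Nat.div_le_div_right h
        have h82 : (8 * m + 8) / 2 = 4 * m + 4 := by omega
        omega
      have hNN : N / 2 + N / 2 ≤ N := by omega
      calc 2 * m * t₀ = 2 * m * q + 2 * m := by rw [ht₀, hqdef]; ring
      _ < N / 2 + N / 2 := by omega
      _ ≤ N := hNN
    calc (t₀ * (N + 1) ^ (t₀ - 1)) ^ 2 ≤ ((N + 1) * (N + 1) ^ (t₀ - 1)) ^ 2 := by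
          gcongr
    _ = ((N + 1) ^ t₀) ^ 2 := by
        congr 1
        rw [← pow_succ']
        congr 1
        omega
    _ ≤ ((2 ^ m) ^ t₀) ^ 2 := by gcongr
    _ = 2 ^ (2 * m * t₀) := by
        rw [← pow_mul, ← pow_mul]
        congr 1
        ring
    _ < 2 ^ N := Nat.pow_lt_pow_right (by omega) key


lemma supersat (e : ℕ) (he : 1 ≤ e) :
    ∀ k : ℕ, ∃ γ C : ℕ, 1 ≤ γ ∧ ∀ (P n : ℕ) (X : Finset (Fin k → Fin n)),
      1 ≤ P → γ * P ^ C ≤ n → n ^ k ≤ P * X.card →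
      n ^ (e * k) ≤ γ * P ^ C * (boxes e k n X).card := by
  intro k
  induction k with
  | zero =>
      refine ⟨1, 0, le_refl _, ?_⟩
      intro P n X hP hside hX
      have hXne : X.Nonempty := by
        rcases X.eq_empty_or_nonempty with h | h
        · subst h
          simp at hX
        · exact h
      obtain ⟨x₀, hx₀⟩ := hXne
      have hmem : (fun i : Fin 0 => i.elim0) ∈ boxes e 0 n X := by
        rw [mem_boxes]
        refine ⟨fun i => i.elim0, fun x _ => ?_⟩
        have hx : x = x₀ := Subsingleton.elim x x₀
        rw [hx]; exact hx₀
      have hpos : 1 ≤ (boxes e 0 n X).card := Finset.card_pos.2 ⟨_, hmem⟩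
      simp only [Nat.mul_zero, pow_zero, one_mul]
      omega
  | succ k IH =>
    obtain ⟨γ, C, hγ, ih⟩ := IH
    set A := γ * 2 ^ (C + 1) with hA
    refine ⟨2 * A * (4 * e * A) ^ e + γ * 2 ^ C + 4 * e * A + 1, (C + 1) * (e + 1), by omega, ?_⟩
    set γ' := 2 * A * (4 * e * A) ^ e + γ * 2 ^ C + 4 * e * A + 1 with hγ'
    set C' := (C + 1) * (e + 1) with hC'
    intro P n X hP hside hX
    have hCC' : C + 1 ≤ C' := by
      rw [hC']
      exact Nat.le_mul_of_pos_right _ (by omega)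
    have hPC : (1:ℕ) ≤ P ^ C' := Nat.one_le_pow _ _ (by omega)
    have hγ'1 : 1 ≤ γ' := by
      have : 1 + (2 * A * (4 * e * A) ^ e + γ * 2 ^ C + 4 * e * A) = γ' := by
        rw [hγ']
        ring
      exact Nat.le.intro this
    have hγb1 : γ * 2 ^ C ≤ γ' := by
      have : γ * 2 ^ C + (2 * A * (4 * e * A) ^ e + 4 * e * A + 1) = γ' := by
        rw [hγ']
        ring
      exact Nat.le.intro this
    have hγb2 : 4 * e * A ≤ γ' := by
      have : 4 * e * A + (2 * A * (4 * e * A) ^ e + γ * 2 ^ C + 1) = γ' := by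
        rw [hγ']
        ring
      exact Nat.le.intro this
    have hγb3 : 2 * A * (4 * e * A) ^ e ≤ γ' := by
      have : 2 * A * (4 * e * A) ^ e + (γ * 2 ^ C + 4 * e * A + 1) = γ' := by
        rw [hγ']
        ring
      exact Nat.le.intro this
    have hn1 : 1 ≤ n := by
      have h := Nat.mul_le_mul hγ'1 hPC
      simpa using le_trans h hside
    -- slices
    set Xa : Fin n → Finset (Fin k → Fin n) :=
      fun a => Finset.univ.filter (fun y => Fin.snoc y a ∈ X) with hXa
    have hsum : ∑ a : Fin n, (Xa a).card = X.card := by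
      have h1 : X.card = ∑ a ∈ (univ : Finset (Fin n)),
          (X.filter (fun x => x (Fin.last k) = a)).card :=
        Finset.card_eq_sum_card_fiberwise (fun x _ => mem_univ _)
      rw [h1]
      refine Finset.sum_congr rfl (fun a _ => ?_)
      refine Finset.card_bij (fun y _ => Fin.snoc y a) ?_ ?_ ?_
      · intro y hy
        rw [mem_filter]
        have := (mem_filter.1 hy).2
        exact ⟨this, by simp [Fin.snoc_last]⟩
      · intro y₁ h₁ y₂ h₂ heq
        have := congrArg Fin.init heq
        rwa [Fin.init_snoc, Fin.init_snoc] at this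
      · intro x hx
        obtain ⟨hxX, hxa⟩ := mem_filter.1 hx
        have hsn : Fin.snoc (Fin.init x) a = x := by
          rw [← hxa]
          exact Fin.snoc_init_self x
        refine ⟨Fin.init x, ?_, ?_⟩
        · rw [mem_filter]
          refine ⟨mem_univ _, ?_⟩
          rw [hsn]
          exact hxX
        · exact hsn
    have hcard_univ : (univ : Finset (Fin k → Fin n)).card = n ^ k := by
      rw [card_univ]
      simp [Fintype.card_fun]
    have hXak : ∀ a, (Xa a).card ≤ n ^ k := fun a => by
      calc (Xa a).card ≤ (univ : Finset (Fin k → Fin n)).card := card_filter_le _ _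
      _ = n ^ k := hcard_univ
    set D := (univ : Finset (Fin n)).filter (fun a => n ^ k ≤ 2 * P * (Xa a).card) with hD
    have hDn : n ≤ 2 * P * D.card := by
      have h2 : ∑ a ∈ D, 2 * P * (Xa a).card ≤ D.card * (2 * P * n ^ k) :=
        Finset.sum_le_card_nsmul _ _ _ (fun a _ => Nat.mul_le_mul_left _ (hXak a))
      have h3 : ∑ a ∈ (univ : Finset (Fin n)).filter
            (fun a => ¬ (n ^ k ≤ 2 * P * (Xa a).card)), 2 * P * (Xa a).card
          ≤ n * n ^ k := by
        calc ∑ a ∈ (univ : Finset (Fin n)).filter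
              (fun a => ¬ (n ^ k ≤ 2 * P * (Xa a).card)), 2 * P * (Xa a).card
            ≤ ((univ : Finset (Fin n)).filter
              (fun a => ¬ (n ^ k ≤ 2 * P * (Xa a).card))).card * n ^ k :=
              Finset.sum_le_card_nsmul _ _ _
                (fun a ha => le_of_lt (Nat.lt_of_not_le (mem_filter.1 ha).2))
        _ ≤ n * n ^ k := by
            refine Nat.mul_le_mul_right _ ?_
            calc _ ≤ (univ : Finset (Fin n)).card := card_filter_le _ _
            _ = n := by rw [card_univ, Fintype.card_fin]
      have hsplit := Finset.sum_filter_add_sum_filter_not (univ : Finset (Fin n))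
        (fun a => n ^ k ≤ 2 * P * (Xa a).card) (fun a => 2 * P * (Xa a).card)
      have htot : 2 * n ^ (k + 1) ≤ ∑ a : Fin n, 2 * P * (Xa a).card := by
        rw [← Finset.mul_sum, hsum]
        calc 2 * n ^ (k+1) ≤ 2 * (P * X.card) := Nat.mul_le_mul_left _ hX
        _ = 2 * P * X.card := by ring
      have hcomb : 2 * n ^ (k + 1) ≤ D.card * (2 * P * n ^ k) + n * n ^ k := by
        rw [← hsplit] at htot
        exact le_trans htot (Nat.add_le_add h2 h3)
      have hkey : n ^ k * n + n ^ k * n ≤ (2 * P * D.card) * n ^ k + n ^ k * n := by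
        have hp : n ^ (k+1) = n ^ k * n := pow_succ n k
        calc n ^ k * n + n ^ k * n = 2 * n ^ (k+1) := by rw [hp]; ring
        _ ≤ D.card * (2 * P * n ^ k) + n * n ^ k := hcomb
        _ = (2 * P * D.card) * n ^ k + n ^ k * n := by ring
      have hkey2 : n * n ^ k ≤ (2 * P * D.card) * n ^ k := by
        have := Nat.le_of_add_le_add_right hkey
        calc n * n ^ k = n ^ k * n := by ring
        _ ≤ _ := this
      exact Nat.le_of_mul_le_mul_right
        (by calc n * n ^ k ≤ (2 * P * D.card) * n ^ k := hkey2) (pow_pos (by omega) k)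
    have hΓside : γ * (2 * P) ^ C ≤ n := by
      have h2 : P ^ C ≤ P ^ C' := Nat.pow_le_pow_right (by omega) (by omega)
      calc γ * (2 * P) ^ C = γ * 2 ^ C * P ^ C := by rw [mul_pow]; ring
      _ ≤ γ' * P ^ C' := Nat.mul_le_mul hγb1 h2
      _ ≤ n := hside
    set Γ := γ * (2 * P) ^ C with hΓ
    have hΓ1 : 0 < Γ := Nat.mul_pos (by omega) (pow_pos (by omega) C)
    have hIH : ∀ a ∈ D, n ^ (e * k) ≤ Γ * (boxes e k n (Xa a)).card := fun a ha =>
      ih (2 * P) n (Xa a) (by omega) hΓside (mem_filter.1 ha).2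
    set S := ∑ a : Fin n, (boxes e k n (Xa a)).card with hS
    set Γ₂ := 2 * P * Γ with hΓ₂
    have hΓ₂1 : 0 < Γ₂ := Nat.mul_pos (by omega) hΓ1
    have hSlb : n ^ (e * k + 1) ≤ Γ₂ * S := by
      have h1 : D.card * n ^ (e * k) ≤ ∑ a ∈ D, Γ * (boxes e k n (Xa a)).card :=
        Finset.card_nsmul_le_sum _ _ _ (fun a ha => hIH a ha)
      have h2 : ∑ a ∈ D, Γ * (boxes e k n (Xa a)).card ≤ Γ * S := by
        rw [hS, Finset.mul_sum]
        exact Finset.sum_le_sum_of_subset (subset_univ D)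
      calc n ^ (e * k + 1) = n * n ^ (e * k) := by rw [pow_succ]; ring
      _ ≤ (2 * P * D.card) * n ^ (e * k) := Nat.mul_le_mul_right _ hDn
      _ = (2 * P) * (D.card * n ^ (e * k)) := by ring
      _ ≤ (2 * P) * (Γ * S) := Nat.mul_le_mul_left _ (le_trans h1 h2)
      _ = Γ₂ * S := by rw [hΓ₂]; ring
    have hΓ₂eq : Γ₂ = A * P ^ (C + 1) := by
      rw [hΓ₂, hΓ, hA, mul_pow]
      ring
    -- all boxes
    set AB := Fintype.piFinset (fun _ : Fin k => (univ : Finset (Fin n)).powersetCard e)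
      with hAB
    have hmemAB : ∀ E' : Fin k → Finset (Fin n), E' ∈ AB ↔ ∀ i, (E' i).card = e := by
      intro E'
      simp [hAB, Fintype.mem_piFinset, mem_powersetCard]
    set Nb := AB.card with hNb
    have hNbub : Nb ≤ n ^ (e * k) := by
      rw [hNb, hAB, Fintype.card_piFinset]
      have h1 : ((univ : Finset (Fin n)).powersetCard e).card = n.choose e := by
        rw [card_powersetCard, card_univ, Fintype.card_fin]
      rw [Finset.prod_const, h1, card_univ, Fintype.card_fin]
      have h2 : n.choose e ≤ n ^ e := by
        have hd := Nat.descFactorial_le_pow n e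
        have heq := Nat.descFactorial_eq_factorial_mul_choose n e
        have h3 : n.choose e ≤ e.factorial * n.choose e :=
          Nat.le_mul_of_pos_left _ (Nat.factorial_pos e)
        omega
      calc (n.choose e) ^ k ≤ (n ^ e) ^ k := Nat.pow_le_pow_left h2 k
      _ = n ^ (e * k) := by rw [← pow_mul]
    set G : (Fin k → Finset (Fin n)) → Finset (Fin n) :=
      fun E' => (univ : Finset (Fin n)).filter (fun a => E' ∈ boxes e k n (Xa a)) with hG
    have hfS : ∑ E' ∈ AB, (G E').card = S := by
      have h1 : ∑ E' ∈ (univ : Finset (Fin k → Finset (Fin n))), (G E').card = S := by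
        rw [hS]
        simp only [hG, Finset.card_filter]
        rw [Finset.sum_comm]
        refine Finset.sum_congr rfl (fun a _ => ?_)
        rw [← Finset.card_filter]
        congr 1
        rw [Finset.filter_mem_eq_inter, Finset.univ_inter]
      rw [← h1]
      refine Finset.sum_subset (subset_univ AB) (fun E' _ hE' => ?_)
      rw [Finset.card_eq_zero, hG]
      rw [Finset.filter_eq_empty_iff]
      intro a _
      intro hmem
      exact hE' ((hmemAB E').2 (mem_boxes.1 hmem).1)
    have hbc : (boxes e (k+1) n X).card = ∑ E' ∈ AB, ((G E').card).choose e := by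
      have h1 : (boxes e (k+1) n X).card
          = (AB.sigma (fun E' => (G E').powersetCard e)).card := by
        refine Finset.card_bij' (fun E _ => ⟨Fin.init E, E (Fin.last k)⟩)
          (fun p _ => Fin.snoc p.1 p.2) ?_ ?_ ?_ ?_
        · intro E hE
          obtain ⟨hcards, hsub⟩ := mem_boxes.1 hE
          rw [Finset.mem_sigma]
          constructor
          · rw [hmemAB]
            intro i
            exact hcards i.castSucc
          · rw [mem_powersetCard]
            constructor
            · intro a ha
              rw [hG, mem_filter]
              refine ⟨mem_univ _, ?_⟩
              rw [mem_boxes]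
              refine ⟨fun i => hcards i.castSucc, fun y hy => ?_⟩
              rw [hXa]
              simp only [mem_filter, mem_univ, true_and]
              apply hsub
              intro i
              refine Fin.lastCases ?_ (fun j => ?_) i
              · rw [Fin.snoc_last]
                exact ha
              · rw [Fin.snoc_castSucc]
                exact hy j
            · exact hcards (Fin.last k)
        · intro p hp
          obtain ⟨hp1, hp2⟩ := Finset.mem_sigma.1 hp
          obtain ⟨hsubG, hcarde⟩ := mem_powersetCard.1 hp2
          rw [mem_boxes]
          constructor
          · intro i
            refine Fin.lastCases ?_ (fun j => ?_) i
            · rw [Fin.snoc_last]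
              exact hcarde
            · rw [Fin.snoc_castSucc]
              exact (hmemAB p.1).1 hp1 j
          · intro x hx
            have hlast : x (Fin.last k) ∈ p.2 := by
              have := hx (Fin.last k)
              rwa [Fin.snoc_last] at this
            have haG := hsubG hlast
            rw [hG, mem_filter] at haG
            have hbox := (mem_boxes.1 haG.2).2
            have hinit : Fin.init x ∈ Xa (x (Fin.last k)) := by
              apply hbox
              intro i
              have := hx i.castSucc
              rwa [Fin.snoc_castSucc] at this
            rw [hXa] at hinit
            simp only [mem_filter, mem_univ, true_and] at hinit
            rwa [Fin.snoc_init_self] at hinit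
        · intro E hE
          exact Fin.snoc_init_self E
        · intro p hp
          cases p with
          | mk p1 p2 =>
            simp [Fin.init_snoc, Fin.snoc_last]
      rw [h1, Finset.card_sigma]
      exact Finset.sum_congr rfl (fun E' _ => by rw [card_powersetCard])
    -- heavy boxes
    have hS1 : 1 ≤ S := by
      by_contra h
      have hS0 : S = 0 := by omega
      rw [hS0, Nat.mul_zero] at hSlb
      have : 1 ≤ n ^ (e * k + 1) := Nat.one_le_pow _ _ (by omega)
      omega
    have hNb1 : 1 ≤ Nb := by
      by_contra h
      have hAB0 : AB = ∅ := Finset.card_eq_zero.1 (by omega)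
      rw [hAB0, Finset.sum_empty] at hfS
      omega
    set H := AB.filter (fun E' => S ≤ 2 * Nb * (G E').card) with hH
    have hHheavy : S + 1 ≤ 2 * ∑ E' ∈ H, (G E').card := by
      have hsplit := Finset.sum_filter_add_sum_filter_not AB
        (fun E' => S ≤ 2 * Nb * (G E').card) (fun E' => (G E').card)
      have hlight : ∑ E' ∈ AB.filter (fun E' => ¬ (S ≤ 2 * Nb * (G E').card)),
          2 * Nb * (G E').card ≤ Nb * (S - 1) := by
        calc ∑ E' ∈ AB.filter (fun E' => ¬ (S ≤ 2 * Nb * (G E').card)), 2 * Nb * (G E').card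
            ≤ (AB.filter (fun E' => ¬ (S ≤ 2 * Nb * (G E').card))).card * (S - 1) :=
            Finset.sum_le_card_nsmul _ _ _ (fun E' hE' => by
              have h := (mem_filter.1 hE').2
              exact Nat.le_pred_of_lt (Nat.lt_of_not_le h))
        _ ≤ Nb * (S - 1) := Nat.mul_le_mul_right _ (card_filter_le _ _)
      have hlight' : 2 * ∑ E' ∈ AB.filter (fun E' => ¬ (S ≤ 2 * Nb * (G E').card)),
          (G E').card ≤ S - 1 := by
        refine Nat.le_of_mul_le_mul_left ?_ (show 0 < Nb by omega)
        calc Nb * (2 * ∑ E' ∈ AB.filter (fun E' => ¬ (S ≤ 2 * Nb * (G E').card)), (G E').card)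
            = ∑ E' ∈ AB.filter (fun E' => ¬ (S ≤ 2 * Nb * (G E').card)), 2 * Nb * (G E').card := by
              rw [Finset.mul_sum, Finset.mul_sum]
              exact Finset.sum_congr rfl (fun E' _ => by ring)
        _ ≤ Nb * (S - 1) := hlight
      rw [hH]
      omega
    have hfub : ∀ E', (G E').card ≤ n := fun E' => by
      calc (G E').card ≤ (univ : Finset (Fin n)).card := card_filter_le _ _
      _ = n := by rw [card_univ, Fintype.card_fin]
    have hHn : n ^ (e * k) ≤ 2 * Γ₂ * H.card := by
      have h1 : ∑ E' ∈ H, (G E').card ≤ H.card * n :=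
        Finset.sum_le_card_nsmul _ _ _ (fun E' _ => hfub E')
      refine Nat.le_of_mul_le_mul_right ?_ (show 0 < n by omega)
      calc n ^ (e * k) * n = n ^ (e * k + 1) := by rw [pow_succ]
      _ ≤ Γ₂ * S := hSlb
      _ ≤ Γ₂ * (2 * (H.card * n)) := Nat.mul_le_mul_left _ (by linarith [hHheavy, h1])
      _ = (2 * Γ₂ * H.card) * n := by ring
    have hf_heavy : ∀ E' ∈ H, n ≤ 2 * Γ₂ * (G E').card := by
      intro E' hE'
      have h1 : S ≤ 2 * Nb * (G E').card := (mem_filter.1 hE').2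
      refine Nat.le_of_mul_le_mul_left ?_ (show 0 < n ^ (e * k) from pow_pos (by omega) _)
      calc n ^ (e * k) * n = n ^ (e * k + 1) := by rw [pow_succ]
      _ ≤ Γ₂ * S := hSlb
      _ ≤ Γ₂ * (2 * Nb * (G E').card) := Nat.mul_le_mul_left _ h1
      _ ≤ Γ₂ * (2 * n ^ (e * k) * (G E').card) := by
          refine Nat.mul_le_mul_left _ ?_
          exact Nat.mul_le_mul_right _ (by omega)
      _ = n ^ (e * k) * (2 * Γ₂ * (G E').card) := by ring
    have hside2 : 4 * e * Γ₂ ≤ n := by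
      rw [hΓ₂eq]
      calc 4 * e * (A * P ^ (C + 1)) = (4 * e * A) * P ^ (C + 1) := by ring
      _ ≤ γ' * P ^ C' := Nat.mul_le_mul hγb2 (Nat.pow_le_pow_right (by omega) hCC')
      _ ≤ n := hside
    have hchoose : ∀ E' ∈ H, n ^ e ≤ (2 * Γ₂) ^ e * ((2 * e) ^ e * ((G E').card).choose e) := by
      intro E' hE'
      have hf1 := hf_heavy E' hE'
      have hf2e : 2 * e ≤ (G E').card := by
        refine Nat.le_of_mul_le_mul_left ?_ (show 0 < 2 * Γ₂ by omega)
        calc 2 * Γ₂ * (2 * e) = 4 * e * Γ₂ := by ring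
        _ ≤ n := hside2
        _ ≤ 2 * Γ₂ * (G E').card := hf1
      have hkey : ((G E').card) ^ e ≤ (2 * e) ^ e * ((G E').card).choose e := by
        have h1 : ((G E').card + 1 - e) ^ e ≤ ((G E').card).descFactorial e :=
          Nat.pow_sub_le_descFactorial _ _
        have h2 : ((G E').card).descFactorial e = e.factorial * ((G E').card).choose e :=
          Nat.descFactorial_eq_factorial_mul_choose _ _
        have h3 : e.factorial ≤ e ^ e := Nat.factorial_le_pow e
        have h4 : (G E').card ≤ 2 * ((G E').card + 1 - e) := by omega
        calc ((G E').card) ^ e ≤ (2 * ((G E').card + 1 - e)) ^ e := Nat.pow_le_pow_left h4 e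
        _ = 2 ^ e * ((G E').card + 1 - e) ^ e := by rw [mul_pow]
        _ ≤ 2 ^ e * (((G E').card).descFactorial e) := Nat.mul_le_mul_left _ h1
        _ = 2 ^ e * (e.factorial * ((G E').card).choose e) := by rw [h2]
        _ ≤ 2 ^ e * (e ^ e * ((G E').card).choose e) :=
            Nat.mul_le_mul_left _ (Nat.mul_le_mul_right _ h3)
        _ = (2 * e) ^ e * ((G E').card).choose e := by rw [mul_pow]; ring
      calc n ^ e ≤ (2 * Γ₂ * (G E').card) ^ e := Nat.pow_le_pow_left hf1 e
      _ = (2 * Γ₂) ^ e * ((G E').card) ^ e := by rw [mul_pow]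
      _ ≤ (2 * Γ₂) ^ e * ((2 * e) ^ e * ((G E').card).choose e) :=
          Nat.mul_le_mul_left _ hkey
    -- final assembly
    have h3 : ∑ E' ∈ H, ((G E').card).choose e ≤ (boxes e (k+1) n X).card := by
      rw [hbc]
      exact Finset.sum_le_sum_of_subset (filter_subset _ _)
    have hfinal : n ^ (e * (k + 1))
        ≤ (2 * Γ₂) * ((2 * Γ₂) ^ e * ((2 * e) ^ e * (boxes e (k+1) n X).card)) := by
      have h1 : H.card * n ^ e ≤ ∑ E' ∈ H, (2 * Γ₂) ^ e * ((2 * e) ^ e * ((G E').card).choose e) :=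
        Finset.card_nsmul_le_sum _ _ _ (fun E' hE' => hchoose E' hE')
      have h2 : (2 * Γ₂) ^ e * ((2 * e) ^ e * ∑ E' ∈ H, ((G E').card).choose e)
          = ∑ E' ∈ H, (2 * Γ₂) ^ e * ((2 * e) ^ e * ((G E').card).choose e) := by
        rw [Finset.mul_sum, Finset.mul_sum]
      calc n ^ (e * (k + 1)) = n ^ (e * k) * n ^ e := by
            rw [Nat.mul_succ, pow_add]
      _ ≤ (2 * Γ₂ * H.card) * n ^ e := Nat.mul_le_mul_right _ hHn
      _ = (2 * Γ₂) * (H.card * n ^ e) := by ring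
      _ ≤ (2 * Γ₂) * (∑ E' ∈ H, (2 * Γ₂) ^ e * ((2 * e) ^ e * ((G E').card).choose e)) :=
          Nat.mul_le_mul_left _ h1
      _ = (2 * Γ₂) * ((2 * Γ₂) ^ e * ((2 * e) ^ e * ∑ E' ∈ H, ((G E').card).choose e)) := by
          rw [h2]
      _ ≤ (2 * Γ₂) * ((2 * Γ₂) ^ e * ((2 * e) ^ e * (boxes e (k+1) n X).card)) := by
          refine Nat.mul_le_mul_left _ ?_
          refine Nat.mul_le_mul_left _ ?_
          exact Nat.mul_le_mul_left _ h3
    have hcoef : (2 * Γ₂) * ((2 * Γ₂) ^ e * (2 * e) ^ e) ≤ γ' * P ^ C' := by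
      rw [hΓ₂eq]
      set Q := P ^ (C + 1) with hQdef
      have hpp : (2 * (A * Q)) ^ e * (2 * e) ^ e = (4 * e * A) ^ e * Q ^ e := by
        rw [← mul_pow, ← mul_pow]
        congr 1
        ring
      have hid : (2 * (A * Q)) * ((2 * (A * Q)) ^ e * (2 * e) ^ e)
          = (2 * A * (4 * e * A) ^ e) * Q ^ (e + 1) := by
        rw [hpp, pow_succ]
        ring
      have hQC : Q ^ (e + 1) = P ^ C' := by
        rw [hQdef, hC', ← pow_mul]
      calc (2 * (A * Q)) * ((2 * (A * Q)) ^ e * (2 * e) ^ e)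
          = (2 * A * (4 * e * A) ^ e) * Q ^ (e + 1) := hid
      _ = (2 * A * (4 * e * A) ^ e) * P ^ C' := by rw [hQC]
      _ ≤ γ' * P ^ C' := Nat.mul_le_mul_right _ hγb3
    calc n ^ (e * (k + 1))
        ≤ (2 * Γ₂) * ((2 * Γ₂) ^ e * ((2 * e) ^ e * (boxes e (k+1) n X).card)) := hfinal
    _ = ((2 * Γ₂) * ((2 * Γ₂) ^ e * (2 * e) ^ e)) * (boxes e (k+1) n X).card := by ring
    _ ≤ (γ' * P ^ C') * (boxes e (k+1) n X).card := Nat.mul_le_mul_right _ hcoef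

lemma choose_le_pow' (n r : ℕ) : n.choose r ≤ n ^ r := by
  calc n.choose r ≤ r.factorial * n.choose r := Nat.le_mul_of_pos_left _ (Nat.factorial_pos r)
  _ = n.descFactorial r := (Nat.descFactorial_eq_factorial_mul_choose n r).symm
  _ ≤ n ^ r := Nat.descFactorial_le_pow n r

lemma box_lemma (e k : ℕ) (he : 1 ≤ e) :
    ∃ γ C : ℕ, 1 ≤ γ ∧ ∀ (P n : ℕ) (X : Finset (Fin k → Fin n)),
      1 ≤ P → γ * P ^ C ≤ n → n ^ k ≤ P * X.card →
      ∃ E : Fin k → Finset (Fin n), (∀ i, (E i).card = e) ∧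
        ∀ x : Fin k → Fin n, (∀ i, x i ∈ E i) → x ∈ X := by
  obtain ⟨γ, C, hγ, h⟩ := supersat e he k
  refine ⟨γ, C, hγ, fun P n X hP hside hX => ?_⟩
  have hss := h P n X hP hside hX
  have hpos : 0 < (boxes e k n X).card := by
    rcases Nat.eq_zero_or_pos (boxes e k n X).card with h0 | h0
    · rw [h0, Nat.mul_zero] at hss
      have h1 : 0 < n := lt_of_lt_of_le (Nat.mul_pos (by omega) (pow_pos (by omega) C)) hside
      have h2 : 1 ≤ n ^ (e * k) := Nat.one_le_pow _ _ h1
      omega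
    · exact h0
  obtain ⟨E, hE⟩ := Finset.card_pos.1 hpos
  obtain ⟨h1, h2⟩ := mem_boxes.1 hE
  exact ⟨E, h1, h2⟩

end VCproof

/-- Boundedness of `VC_k`-dimension is preserved under intersections (Boolean
combinations): there is a bound `D = D(k,d)` such that whenever `F` and `G` are
families of subsets of `V 1 × ... × V k` of `VC_k`-dimension at most `d`, the family
`{S ∩ T : S ∈ F, T ∈ G}` has `VC_k`-dimension at most `D`. -/
theorem VCle_inter (k d : ℕ) :
    ∃ D : ℕ, ∀ (V : Fin k → Type u) (F G : Set (Set (∀ i, V i))),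
      VCle F d → VCle G d →
      VCle {R : Set (∀ i, V i) | ∃ S ∈ F, ∃ T ∈ G, R = S ∩ T} D := by
  classical
  obtain ⟨γ, C, hγ1, hbox⟩ := VCproof.box_lemma (d + 1) k (by omega)
  obtain ⟨M₁, hM₁⟩ := VCproof.poly_le_exp (γ * (4 * (k + 2)) ^ C) C
  obtain ⟨M₂, hM₂⟩ := VCproof.poly_le_exp (8 * k + 16) 1
  set M := max M₁ M₂ with hM
  set n := 2 ^ M with hn
  have hn1 : 1 ≤ n := Nat.one_le_pow _ _ (by norm_num)
  refine ⟨n - 1, ?_⟩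
  intro V F G hF hG hVC
  have hVC' : VCge {R : Set (∀ i, V i) | ∃ S ∈ F, ∃ T ∈ G, R = S ∩ T} n := by
    have h : n - 1 + 1 = n := by omega
    rwa [h] at hVC
  obtain ⟨A, hA, hsh⟩ := hVC'
  -- numerics
  set N := n ^ k with hN
  have hN1 : 1 ≤ N := Nat.one_le_pow _ _ (by omega)
  set m := Nat.clog 2 (N + 1) with hm
  have hNm : N + 1 ≤ 2 ^ m := Nat.le_pow_clog (by norm_num) _
  have hmle : m ≤ k * M + 1 := by
    rw [hm]
    refine (Nat.clog_le_iff_le_pow (by norm_num)).2 ?_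
    have hNe : N = 2 ^ (M * k) := by rw [hN, hn, ← pow_mul]
    rw [hNe]
    have h1 : (1:ℕ) ≤ 2 ^ (M * k) := Nat.one_le_pow _ _ (by norm_num)
    calc (2:ℕ) ^ (M * k) + 1 ≤ 2 ^ (M * k) + 2 ^ (M * k) := by omega
    _ = 2 ^ (M * k + 1) := by rw [pow_succ]; ring
    _ = 2 ^ (k * M + 1) := by rw [mul_comm M k]
  set P := 4 * m + 4 with hP
  have hP1 : 1 ≤ P := by omega
  have hPn : γ * P ^ C ≤ n := by
    have hPle : P ≤ 4 * (k + 2) * (M + 1) := by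
      have h4 : 4 * (k + 2) * (M + 1) = 4 * (k * M) + 4 * k + 8 * M + 8 := by ring
      have h5 : m ≤ k * M + 1 := hmle
      omega
    calc γ * P ^ C ≤ γ * (4 * (k + 2) * (M + 1)) ^ C :=
        Nat.mul_le_mul_left _ (Nat.pow_le_pow_left hPle C)
    _ = γ * (4 * (k + 2)) ^ C * (M + 1) ^ C := by rw [mul_pow]; ring
    _ ≤ 2 ^ M := hM₁ M (le_max_left _ _)
    _ = n := hn.symm
  have hcase : N < P ∨ 8 * m + 8 ≤ N := by
    by_cases hk : k = 0
    · left
      have hNe : N = 1 := by rw [hN, hk, pow_zero]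
      omega
    · right
      have hkn : n ≤ N := by
        rw [hN]
        exact Nat.le_self_pow hk n
      have h2 : 8 * m + 8 ≤ (8 * k + 16) * (M + 1) ^ 1 := by
        have h4 : (8 * k + 16) * (M + 1) ^ 1 = 8 * (k * M) + 8 * k + 16 * M + 16 := by ring
        have h5 : m ≤ k * M + 1 := hmle
        omega
      calc 8 * m + 8 ≤ (8 * k + 16) * (M + 1) ^ 1 := h2
      _ ≤ 2 ^ M := hM₂ M (le_max_right _ _)
      _ = n := hn.symm
      _ ≤ N := hkn
  set t₀ := N / P + 1 with ht₀
  -- the grid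
  have hgridcard : (Finset.univ : Finset (Fin k → Fin n)).card = N := by
    rw [Finset.card_univ, hN]
    simp [Fintype.card_fun]
  -- coordinate bijections
  have hAfin : ∀ i, (A i).Finite := fun i => (hA i).1
  set T : ∀ i : Fin k, Finset (V i) := fun i => (hAfin i).toFinset with hT
  have hTcard : ∀ i, (T i).card = n := by
    intro i
    have h1 := (hA i).2
    rw [Set.ncard_eq_toFinset_card (A i) (hAfin i)] at h1
    rw [hT]
    exact h1
  set u : ∀ i : Fin k, Fin n → V i := fun i j =>
    ((T i).equivFin.symm (finCongr (hTcard i).symm j) : V i) with hu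
  have hu_memT : ∀ i j, u i j ∈ T i := fun i j =>
    ((T i).equivFin.symm (finCongr (hTcard i).symm j)).2
  have hu_mem : ∀ i j, u i j ∈ A i := by
    intro i j
    have := hu_memT i j
    rw [hT] at this
    exact (Set.Finite.mem_toFinset _).1 this
  have hu_inj : ∀ i, Function.Injective (u i) := by
    intro i j j' hjj
    have h1 : (T i).equivFin.symm (finCongr (hTcard i).symm j)
        = (T i).equivFin.symm (finCongr (hTcard i).symm j') := Subtype.coe_injective hjj
    have h2 := (T i).equivFin.symm.injective h1
    exact (finCongr (hTcard i).symm).injective h2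
  have hu_surj : ∀ i, ∀ v, v ∈ A i → ∃ j, u i j = v := by
    intro i v hv
    have hvT : v ∈ T i := by
      rw [hT]
      exact (Set.Finite.mem_toFinset _).2 hv
    refine ⟨finCongr (hTcard i) ((T i).equivFin ⟨v, hvT⟩), ?_⟩
    rw [hu]
    simp
  set ι : (Fin k → Fin n) → (∀ i, V i) := fun x i => u i (x i) with hι
  have hι_box : ∀ x, ι x ∈ pibox A := fun x i => hu_mem i (x i)
  have hι_inj : Function.Injective ι := by
    intro x y hxy
    funext i
    exact hu_inj i (congrFun hxy i)
  -- trace families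
  set Sg : Finset (Finset (Fin k → Fin n)) := Finset.univ.filter
    (fun σ => ∃ S ∈ F, σ = Finset.univ.filter (fun x => ι x ∈ S)) with hSg
  set Th : Finset (Finset (Fin k → Fin n)) := Finset.univ.filter
    (fun σ => ∃ S ∈ G, σ = Finset.univ.filter (fun x => ι x ∈ S)) with hTh
  -- every subset of the grid is an intersection of traces
  have hsurj : ∀ B : Finset (Fin k → Fin n),
      ∃ p : Finset (Fin k → Fin n) × Finset (Fin k → Fin n),
      p.1 ∈ Sg ∧ p.2 ∈ Th ∧ p.1 ∩ p.2 = B := by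
    intro B
    have hBsub : ι '' ↑B ⊆ pibox A := by
      rintro v ⟨x, _, rfl⟩
      exact hι_box x
    obtain ⟨R, hR, hBeq⟩ := hsh _ hBsub
    obtain ⟨S, hS, T', hT', rfl⟩ := hR
    refine ⟨⟨Finset.univ.filter (fun x => ι x ∈ S), Finset.univ.filter (fun x => ι x ∈ T')⟩,
      ?_, ?_, ?_⟩
    · rw [hSg, Finset.mem_filter]
      exact ⟨Finset.mem_univ _, S, hS, rfl⟩
    · rw [hTh, Finset.mem_filter]
      exact ⟨Finset.mem_univ _, T', hT', rfl⟩
    · ext x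
      simp only [Finset.mem_inter, Finset.mem_filter, Finset.mem_univ, true_and]
      constructor
      · rintro ⟨h1, h2⟩
        have hx : ι x ∈ ι '' ↑B := by
          rw [hBeq]
          exact ⟨hι_box x, h1, h2⟩
        obtain ⟨y, hy, hxy⟩ := hx
        exact Finset.mem_coe.1 (hι_inj hxy ▸ hy)
      · intro hxB
        have hx : ι x ∈ ι '' ↑B := ⟨x, hxB, rfl⟩
        rw [hBeq] at hx
        exact ⟨hx.2.1, hx.2.2⟩
  -- counting
  have h2N : 2 ^ N ≤ Sg.card * Th.card := by
    set φ := fun B => Classical.choose (hsurj B) with hφ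
    have hφspec : ∀ B, (φ B).1 ∈ Sg ∧ (φ B).2 ∈ Th ∧ (φ B).1 ∩ (φ B).2 = B :=
      fun B => Classical.choose_spec (hsurj B)
    have hinj : Set.InjOn φ ↑(Finset.univ : Finset (Finset (Fin k → Fin n))) := by
      intro B1 _ B2 _ h
      have h1 := (hφspec B1).2.2
      have h2 := (hφspec B2).2.2
      rw [← h1, ← h2, h]
    have hmaps : ∀ B ∈ (Finset.univ : Finset (Finset (Fin k → Fin n))), φ B ∈ Sg ×ˢ Th :=
      fun B _ => Finset.mem_product.2 ⟨(hφspec B).1, (hφspec B).2.1⟩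
    have hcle := Finset.card_le_card_of_injOn φ hmaps hinj
    rw [Finset.card_univ, Fintype.card_finset, Finset.card_product] at hcle
    have hNcard : Fintype.card (Fin k → Fin n) = N := by
      rw [hN]
      simp [Fintype.card_fun]
    rwa [hNcard] at hcle
  -- the key bound for a single family
  have key : ∀ (Fam : Set (Set (∀ i, V i))) (Ψ : Finset (Finset (Fin k → Fin n))),
      (∀ σ ∈ Ψ, ∃ S ∈ Fam, σ = Finset.univ.filter (fun x => ι x ∈ S)) →
      ¬ VCge Fam (d + 1) →
      Ψ.card ≤ t₀ * (N + 1) ^ (t₀ - 1) := by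
    intro Fam Ψ hΨ hnVC
    have hsmall : ∀ Y ∈ Ψ.shatterer, Y.card < t₀ := by
      intro Y hY
      by_contra hbig
      push_neg at hbig
      have hYP : n ^ k ≤ P * Y.card := by
        have hdm := Nat.div_add_mod N P
        have hmod : N % P < P := Nat.mod_lt _ (by omega)
        have hNle : N ≤ P * t₀ := by
          calc N = P * (N / P) + N % P := (Nat.div_add_mod N P).symm
          _ ≤ P * (N / P) + P := by omega
          _ = P * (N / P + 1) := by ring
          _ = P * t₀ := by rw [ht₀]
        calc n ^ k = N := hN.symm
        _ ≤ P * t₀ := hNle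
        _ ≤ P * Y.card := Nat.mul_le_mul_left _ hbig
      obtain ⟨E, hEcard, hEsub⟩ := hbox P n Y hP1 hPn hYP
      apply hnVC
      refine ⟨fun i => ((E i).image (u i) : Set (V i)), fun i => ⟨Finset.finite_toSet _, ?_⟩, ?_⟩
      · rw [Set.ncard_coe_finset, Finset.card_image_of_injOn ((hu_inj i).injOn)]
        exact hEcard i
      · intro Bs hBs
        have hYsh : Ψ.Shatters Y := Finset.mem_shatterer.1 hY
        set Bg := Finset.univ.filter
          (fun y : Fin k → Fin n => (∀ i, y i ∈ E i) ∧ ι y ∈ Bs) with hBg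
        have hBgY : Bg ⊆ Y := fun y hy => hEsub y (Finset.mem_filter.1 hy).2.1
        obtain ⟨σ, hσΨ, hYσ⟩ := hYsh hBgY
        obtain ⟨S, hSF, hσeq⟩ := hΨ σ hσΨ
        refine ⟨S, hSF, ?_⟩
        have hextract : ∀ v, v ∈ pibox (fun i => ((E i).image (u i) : Set (V i))) →
            ∃ y : Fin k → Fin n, (∀ i, y i ∈ E i) ∧ ι y = v := by
          intro v hvA
          have hex : ∀ i, ∃ j, j ∈ E i ∧ u i j = v i := by
            intro i
            have hvi := hvA i
            simp only [Finset.coe_image, Set.mem_image, Finset.mem_coe] at hvi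
            obtain ⟨j, hj, hj2⟩ := hvi
            exact ⟨j, hj, hj2⟩
          choose y hy1 hy2 using hex
          exact ⟨y, hy1, funext hy2⟩
        ext v
        constructor
        · intro hv
          have hvA := hBs hv
          obtain ⟨y, hyE, hyv⟩ := hextract v hvA
          have hyBg : y ∈ Bg := by
            rw [hBg, Finset.mem_filter]
            exact ⟨Finset.mem_univ _, hyE, by rw [hyv]; exact hv⟩
          rw [← hYσ] at hyBg
          have hyσ := (Finset.mem_inter.1 hyBg).2
          rw [hσeq] at hyσ
          have hyS : ι y ∈ S := (Finset.mem_filter.1 hyσ).2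
          exact ⟨hvA, by rwa [hyv] at hyS⟩
        · rintro ⟨hvA, hvS⟩
          obtain ⟨y, hyE, hyv⟩ := hextract v hvA
          have hyY : y ∈ Y := hEsub y hyE
          have hyσ : y ∈ σ := by
            rw [hσeq, Finset.mem_filter]
            exact ⟨Finset.mem_univ _, by rwa [hyv]⟩
          have hyBg : y ∈ Bg := by
            rw [← hYσ]
            exact Finset.mem_inter.2 ⟨hyY, hyσ⟩
          have hfin := (Finset.mem_filter.1 hyBg).2.2
          rwa [hyv] at hfin
    calc Ψ.card ≤ Ψ.shatterer.card := Finset.card_le_card_shatterer Ψ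
    _ ≤ ((Finset.range t₀).biUnion
          (fun i => (Finset.univ : Finset (Fin k → Fin n)).powersetCard i)).card := by
        refine Finset.card_le_card ?_
        intro Y hY
        rw [Finset.mem_biUnion]
        exact ⟨Y.card, Finset.mem_range.2 (hsmall Y hY),
          Finset.mem_powersetCard.2 ⟨Finset.subset_univ _, rfl⟩⟩
    _ ≤ ∑ i ∈ Finset.range t₀,
          ((Finset.univ : Finset (Fin k → Fin n)).powersetCard i).card :=
        Finset.card_biUnion_le
    _ ≤ ∑ _i ∈ Finset.range t₀, (N + 1) ^ (t₀ - 1) := by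
        refine Finset.sum_le_sum (fun i hi => ?_)
        rw [Finset.card_powersetCard, hgridcard]
        calc N.choose i ≤ N ^ i := VCproof.choose_le_pow' N i
        _ ≤ (N + 1) ^ i := Nat.pow_le_pow_left (by omega) i
        _ ≤ (N + 1) ^ (t₀ - 1) := Nat.pow_le_pow_right (by omega)
            (by
              have := Finset.mem_range.1 hi
              omega)
    _ = t₀ * (N + 1) ^ (t₀ - 1) := by
        rw [Finset.sum_const, Finset.card_range, smul_eq_mul]
  -- put it together
  have hSbound : Sg.card ≤ t₀ * (N + 1) ^ (t₀ - 1) := by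
    refine key F Sg (fun σ h => ?_) hF
    exact (Finset.mem_filter.1 h).2
  have hTbound : Th.card ≤ t₀ * (N + 1) ^ (t₀ - 1) := by
    refine key G Th (fun σ h => ?_) hG
    exact (Finset.mem_filter.1 h).2
  have htail := VCproof.tail_bound N m t₀ hN1 hNm (by rw [ht₀, hP]) (by rw [← hP]; exact hcase)
  have hprod : Sg.card * Th.card ≤ (t₀ * (N + 1) ^ (t₀ - 1)) ^ 2 := by
    calc Sg.card * Th.card ≤ (t₀ * (N + 1) ^ (t₀ - 1)) * (t₀ * (N + 1) ^ (t₀ - 1)) :=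
        Nat.mul_le_mul hSbound hTbound
    _ = (t₀ * (N + 1) ^ (t₀ - 1)) ^ 2 := (sq _).symm
  omega
end

section
/- Recovery of points from diagonal slices: let V = V1 × ... × Vn with |V_i| ≥ 2 for all i, and for a ∈ V let D_n(a) = ⋃_{i∈[n]} {(x_1,...,x_{i−1}, a_i, x_{i+1},...,x_n) : x_j ∈ V_j}. Then D_n is injective: if D_n(a) = D_n(b) then a = b. -/
/-- Recovery of points from diagonal slices: if each `V i` has at least two elements,
then the map sending `a` to `D_n(a) = ⋃ i {x : x i = a i}` is injective. -/
theorem Dn_injective {n : ℕ} (V : Fin n → Type*) (h2 : ∀ i, ∃ x y : V i, x ≠ y) :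
    Function.Injective
      (fun a : ∀ i, V i => ⋃ i : Fin n, {x : ∀ i, V i | x i = a i}) := by
  intro a b hab
  simp only at hab
  funext j
  have hne : ∀ i, ∃ z : V i, z ≠ b i := by
    intro i
    obtain ⟨x, y, hxy⟩ := h2 i
    by_cases hx : x = b i
    · exact ⟨y, by rw [← hx]; exact hxy.symm⟩
    · exact ⟨x, hx⟩
  choose z hz using hne
  classical
  set x : ∀ i, V i := Function.update z j (a j) with hx
  have hxmem : x ∈ ⋃ i : Fin n, {x : ∀ i, V i | x i = a i} := by
    refine Set.mem_iUnion.mpr ⟨j, ?_⟩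
    simp [hx]
  have hxmem' : x ∈ ⋃ i : Fin n, {x : ∀ i, V i | x i = b i} := hab ▸ hxmem
  obtain ⟨i, hi⟩ := Set.mem_iUnion.mp hxmem'
  by_cases hij : i = j
  · subst hij
    simpa [hx] using hi
  · exfalso
    exact hz i (by simpa [hx, Function.update_of_ne hij] using hi)
end

section
/- If a family F of subsets of V1 × ... × Vk satisfies the packing lemma with a single witness (Fact: for all measures, every S ∈ F is ε-approximated by a Boolean combination of N fixed sets from F and at most N lower-arity fibers for some tuple of parameters depending on S) uniformly with bound N independent of the probability measures μ_1,...,μ_k, and each V_i is finite, then taking μ_i uniform on suitable finite subsets shows: for every box A1 × ... × Ak of side m shattered by F one obtains m^k ≤ g(N, ε) for an explicit function g when ε < 1/2; hence F has finite VC_k-dimension. -/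
open MeasureTheory
open scoped ENNReal Classical

universe u

/-- Boolean combinations of a set of generators. -/
inductive BooleanComb {α : Type*} (G : Set (Set α)) : Set α → Prop
  | base {s : Set α} : s ∈ G → BooleanComb G s
  | compl {s : Set α} : BooleanComb G s → BooleanComb G sᶜ
  | union {s t : Set α} : BooleanComb G s → BooleanComb G t → BooleanComb G (s ∪ t)
  | inter {s t : Set α} : BooleanComb G s → BooleanComb G t → BooleanComb G (s ∩ t)

/-- `C` is the cylinder over a (proper, i.e. `≤ (k-1)`-ary) fiber of `E`: the set of
points whose substitution on a nonempty set `u` of coordinates by the tuple `a`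
lands in `E`. -/
def IsFiberCylinder {k : ℕ} {V : Fin k → Type*} (E C : Set (∀ i, V i)) : Prop :=
  ∃ (u : Finset (Fin k)) (a : ∀ i : u, V i), u.Nonempty ∧
    C = {v | (fun i : Fin k => if h : i ∈ u then a ⟨i, h⟩ else v i) ∈ E}

section Aux

lemma entropy_gap_pos {ε : ℝ} (hε0 : 0 < ε) (hε : ε < 1/2) :
    0 < Real.log 2 + ε * Real.log ε + (1 - ε) * Real.log (1 - ε) := by
  have h : Real.binEntropy ε < Real.log 2 :=
    Real.binEntropy_lt_log_two.mpr (by norm_num; linarith)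
  have h1 : (0:ℝ) < 1 - ε := by linarith
  rw [Real.binEntropy, Real.log_inv, Real.log_inv] at h
  linarith

lemma chernoff_sum {ε : ℝ} (hε0 : 0 < ε) (hε : ε < 1/2) (n r : ℕ) (hrn : r ≤ n) :
    (∑ i ∈ Finset.range (r+1), (n.choose i : ℝ)) * (ε ^ r * (1-ε) ^ (n-r)) ≤ 1 := by
  have h1 : (0:ℝ) < 1 - ε := by linarith
  have hle : ε ≤ 1 - ε := by linarith
  have key : (1:ℝ) = ∑ i ∈ Finset.range (n+1), ε ^ i * (1-ε) ^ (n-i) * (n.choose i) := by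
    rw [← add_pow ε (1-ε) n]; norm_num
  rw [Finset.sum_mul]
  refine le_trans ?_ (le_of_eq key.symm)
  apply le_trans (b := ∑ i ∈ Finset.range (r+1), ε ^ i * (1-ε) ^ (n-i) * (n.choose i))
  swap
  · apply Finset.sum_le_sum_of_subset_of_nonneg
    · exact Finset.range_subset_range.mpr (by omega)
    · intro i _ _; positivity
  · apply Finset.sum_le_sum
    intro i hi
    rw [Finset.mem_range] at hi
    have hir : i ≤ r := by omega
    have : ε ^ r * (1-ε) ^ (n-r) ≤ ε ^ i * (1-ε) ^ (n-i) := by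
      have e1 : ε ^ r = ε ^ i * ε ^ (r - i) := by rw [← pow_add]; congr 1; omega
      have e2 : (1-ε) ^ (n-i) = (1-ε) ^ (r-i) * (1-ε) ^ (n-r) := by
        rw [← pow_add]; congr 1; omega
      rw [e1, e2, mul_assoc]
      apply mul_le_mul_of_nonneg_left _ (by positivity)
      apply mul_le_mul_of_nonneg_right _ (by positivity)
      exact pow_le_pow_left₀ (le_of_lt hε0) hle _
    calc (n.choose i : ℝ) * (ε ^ r * (1-ε) ^ (n-r)) ≤ (n.choose i : ℝ) * (ε ^ i * (1-ε)^(n-i)) := by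
          apply mul_le_mul_of_nonneg_left this (by positivity)
      _ = ε ^ i * (1-ε) ^ (n-i) * (n.choose i) := by ring

lemma uniform_isProb {α : Type*} [MeasurableSpace α] (s : Finset α) (hs : s.Nonempty) :
    IsProbabilityMeasure (((s.card : ℝ≥0∞))⁻¹ • ∑ a ∈ s, Measure.dirac a) := by
  constructor
  have hcard : (s.card : ℝ≥0∞) ≠ 0 := by
    simp [Finset.card_ne_zero_of_mem hs.choose_spec]
  rw [Measure.smul_apply, Measure.coe_finset_sum, Finset.sum_apply]
  simp only [measure_univ, Finset.sum_const, nsmul_eq_mul, mul_one, smul_eq_mul]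
  exact ENNReal.inv_mul_cancel hcard (by simp)

lemma le_measure_pi_uniform {k : ℕ} {V : Fin k → Type u} [∀ i, Fintype (V i)]
    [I : ∀ i, MeasurableSpace (V i)] [∀ i, MeasurableSingletonClass (V i)]
    (s : ∀ i, Finset (V i)) (hs : ∀ i, (s i).Nonempty) (E : Set (∀ i, V i))
    [DecidablePred (· ∈ E)] :
    (((Fintype.piFinset s).filter (· ∈ E)).card : ℝ≥0∞) * ∏ i, ((s i).card : ℝ≥0∞)⁻¹ ≤
      Measure.pi (fun i => ((s i).card : ℝ≥0∞)⁻¹ • ∑ a ∈ (s i), Measure.dirac a) E := by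
  classical
  set μ : ∀ i, Measure (V i) := fun i => ((s i).card : ℝ≥0∞)⁻¹ • ∑ a ∈ (s i), Measure.dirac a
    with hμ
  haveI : ∀ i, IsProbabilityMeasure (μ i) := fun i => uniform_isProb _ (hs i)
  set Ef : Finset (∀ i, V i) := (Fintype.piFinset s).filter (· ∈ E) with hEf
  have hsub : (↑Ef : Set (∀ i, V i)) ⊆ E := by
    intro x hx
    simp only [hEf, Finset.coe_filter, Set.mem_setOf_eq] at hx
    exact hx.2
  calc (Ef.card : ℝ≥0∞) * ∏ i, ((s i).card : ℝ≥0∞)⁻¹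
      = ∑ x ∈ Ef, ∏ i, ((s i).card : ℝ≥0∞)⁻¹ := by
        rw [Finset.sum_const, nsmul_eq_mul]
    _ = ∑ x ∈ Ef, Measure.pi μ {x} := by
        apply Finset.sum_congr rfl
        intro x hx
        have hxP : x ∈ Fintype.piFinset s := (Finset.mem_filter.mp hx).1
        rw [← Set.univ_pi_singleton x, Measure.pi_pi]
        apply Finset.prod_congr rfl
        intro i _
        have hxi : x i ∈ s i := Fintype.mem_piFinset.mp hxP i
        rw [hμ]
        simp only [Measure.smul_apply, Measure.coe_finset_sum, Finset.sum_apply, smul_eq_mul]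
        rw [Finset.sum_eq_single_of_mem (x i) hxi]
        · simp [Measure.dirac_apply]
        · intro b _ hb
          simp [Measure.dirac_apply, hb]
    _ = Measure.pi μ (⋃ x ∈ Ef, {x}) := by
        rw [measure_biUnion_finset]
        · intro x _ y _ hxy
          simp [Function.onFun, Set.disjoint_singleton, hxy]
        · intro x _
          rw [← Set.univ_pi_singleton x]
          exact MeasurableSet.univ_pi (fun i => measurableSet_singleton _)
    _ ≤ Measure.pi μ E := by
        apply measure_mono
        intro x hx
        simp only [Set.mem_iUnion, Set.mem_singleton_iff] at hx
        obtain ⟨y, hy, rfl⟩ := hx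
        exact hsub hy

lemma booleanComb_pattern {α : Type*} {N : ℕ} (S C : Fin N → Set α) (D : Set α)
    (h : BooleanComb (Set.range S ∪ Set.range C) D) :
    ∃ Φ : ((Fin N → Bool) × (Fin N → Bool)) → Bool,
      D = {x | Φ (fun j => decide (x ∈ S j), fun j => decide (x ∈ C j)) = true} := by
  induction h with
  | base hs =>
    rcases hs with ⟨j, rfl⟩ | ⟨j, rfl⟩
    · exact ⟨fun p => p.1 j, by ext x; simp⟩
    · exact ⟨fun p => p.2 j, by ext x; simp⟩
  | compl h ih =>
    obtain ⟨Φ, rfl⟩ := ih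
    exact ⟨fun p => !(Φ p), by ext x; simp⟩
  | union h1 h2 ih1 ih2 =>
    obtain ⟨Φ1, rfl⟩ := ih1
    obtain ⟨Φ2, rfl⟩ := ih2
    exact ⟨fun p => (Φ1 p) || (Φ2 p), by ext x; simp⟩
  | inter h1 h2 ih1 ih2 =>
    obtain ⟨Φ1, rfl⟩ := ih1
    obtain ⟨Φ2, rfl⟩ := ih2
    exact ⟨fun p => (Φ1 p) && (Φ2 p), by ext x; simp⟩

lemma card_le_of_approx {α : Type*} [DecidableEq α] (P : Finset α) (D : Finset (Finset α))
    (r : ℕ) (hD : ∀ d ∈ D, d ⊆ P)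
    (h : ∀ B ∈ P.powerset, ∃ d ∈ D, (symmDiff B d).card ≤ r) :
    2 ^ P.card ≤ D.card * ∑ i ∈ Finset.range (r+1), P.card.choose i := by
  classical
  set Ball : Finset (Finset α) := (Finset.range (r+1)).biUnion (fun i => P.powersetCard i)
    with hBall
  set f : Finset α → Finset α × Finset α := fun B =>
    if hB : B ∈ P.powerset then ((h B hB).choose, symmDiff B (h B hB).choose) else (∅, ∅)
    with hf
  have key : P.powerset.card ≤ (D ×ˢ Ball).card := by
    apply Finset.card_le_card_of_injOn f
    · intro B hB
      rw [Finset.mem_coe] at hB ⊢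
      rw [hf]
      simp only [hB, dif_pos]
      obtain ⟨hd, hcard⟩ := (h B hB).choose_spec
      rw [Finset.mem_product]
      refine ⟨hd, ?_⟩
      rw [hBall, Finset.mem_biUnion]
      refine ⟨(symmDiff B (h B hB).choose).card, ?_, ?_⟩
      · rw [Finset.mem_range]; omega
      · rw [Finset.mem_powersetCard]
        refine ⟨?_, rfl⟩
        intro x hx
        rw [Finset.mem_symmDiff] at hx
        rcases hx with ⟨hx, _⟩ | ⟨hx, _⟩
        · exact Finset.mem_powerset.mp hB hx
        · exact hD _ hd hx
    · intro B1 hB1 B2 hB2 hEq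
      rw [Finset.mem_coe] at hB1 hB2
      rw [hf] at hEq
      simp only [hB1, hB2, dif_pos] at hEq
      have h1 := congrArg Prod.fst hEq
      have h2 := congrArg Prod.snd hEq
      simp only at h1 h2
      have : symmDiff (symmDiff B1 (h B1 hB1).choose) ((h B1 hB1).choose)
           = symmDiff (symmDiff B2 (h B2 hB2).choose) ((h B2 hB2).choose) := by rw [h2, h1]
      simpa [symmDiff_symmDiff_cancel_right] using this
  rw [Finset.card_powerset] at key
  refine le_trans key ?_
  rw [Finset.card_product]
  apply Nat.mul_le_mul_left
  refine le_trans (Finset.card_biUnion_le) ?_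
  apply Finset.sum_le_sum
  intro i _
  rw [Finset.card_powersetCard]

set_option maxHeartbeats 1000000 in
lemma cylTraces_card {k : ℕ} {V : Fin k → Type u} [∀ i, Fintype (V i)]
    (s : ∀ i, Finset (V i)) (m : ℕ) (hm : 1 ≤ m) (hcard : ∀ i, (s i).card = m)
    (Cy : Finset (Finset (∀ i, V i)))
    (hCy : ∀ t ∈ Cy, t ⊆ Fintype.piFinset s ∧ ∃ u : Finset (Fin k), u.Nonempty ∧
        ∀ x ∈ Fintype.piFinset s, ∀ y ∈ Fintype.piFinset s,
          (∀ i, i ∉ u → x i = y i) → (x ∈ t ↔ y ∈ t)) :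
    Cy.card ≤ 2 ^ k * 2 ^ (m ^ (k-1)) := by
  classical
  set P := Fintype.piFinset s with hP
  set CylT : Finset (Fin k) → Finset (Finset (∀ i, V i)) := fun u =>
    Cy.filter (fun t => ∀ x ∈ P, ∀ y ∈ P,
      (∀ i, i ∉ u → x i = y i) → (x ∈ t ↔ y ∈ t)) with hCylT
  have per_u : ∀ u : Finset (Fin k), u.Nonempty → (CylT u).card ≤ 2 ^ (m ^ (k-1)) := by
    intro u hu
    set res : (∀ i, V i) → (∀ i : {i : Fin k // i ∉ u}, V i.1) := fun x i => x i.1 with hres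
    set Q := Fintype.piFinset (fun i : {i : Fin k // i ∉ u} => s i.1) with hQ
    have hsubP : ∀ t ∈ CylT u, t ⊆ P := by
      intro t ht
      exact (hCy t (Finset.mem_filter.mp ht).1).1
    have hchar : ∀ t ∈ CylT u, ∀ x ∈ P, (x ∈ t ↔ res x ∈ t.image res) := by
      intro t ht x hxP
      have hinv := (Finset.mem_filter.mp ht).2
      constructor
      · exact fun h => Finset.mem_image_of_mem res h
      · intro h
        obtain ⟨y, hy, hyx⟩ := Finset.mem_image.mp h
        have hagree : ∀ i, i ∉ u → y i = x i := by
          intro i hi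
          exact congrFun hyx ⟨i, hi⟩
        exact (hinv y (hsubP t ht hy) x hxP hagree).mp hy
    have hinj : Set.InjOn (fun t : Finset (∀ i, V i) => t.image res) ↑(CylT u) := by
      intro t1 ht1 t2 ht2 hEq
      rw [Finset.mem_coe] at ht1 ht2
      simp only at hEq
      ext x
      by_cases hxP : x ∈ P
      · rw [hchar t1 ht1 x hxP, hchar t2 ht2 x hxP, hEq]
      · constructor
        · intro hx; exact absurd (hsubP t1 ht1 hx) hxP
        · intro hx; exact absurd (hsubP t2 ht2 hx) hxP
    have hmaps : ∀ t ∈ CylT u, t.image res ∈ Q.powerset := by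
      intro t ht
      rw [Finset.mem_powerset]
      intro z hz
      obtain ⟨y, hy, rfl⟩ := Finset.mem_image.mp hz
      have hyP : y ∈ P := hsubP t ht hy
      rw [hQ, Fintype.mem_piFinset]
      intro i
      exact Fintype.mem_piFinset.mp hyP i.1
    calc (CylT u).card ≤ Q.powerset.card :=
          Finset.card_le_card_of_injOn _ hmaps hinj
      _ = 2 ^ Q.card := Finset.card_powerset Q
      _ ≤ 2 ^ (m ^ (k-1)) := by
          apply Nat.pow_le_pow_right (by norm_num)
          rw [hQ, Fintype.card_piFinset]
          calc ∏ i : {i : Fin k // i ∉ u}, (s i.1).card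
              = ∏ i : {i : Fin k // i ∉ u}, m := by
                apply Finset.prod_congr rfl; intro i _; exact hcard i.1
            _ = m ^ (Fintype.card {i : Fin k // i ∉ u}) := by
                rw [Finset.prod_const, Finset.card_univ]
            _ ≤ m ^ (k - 1) := by
                apply Nat.pow_le_pow_right hm
                have h1 : Fintype.card {i : Fin k // i ∉ u} = k - u.card := by
                  simp [Fintype.card_subtype_compl]
                have h2 := Finset.card_pos.mpr hu
                omega
  have hsub : Cy ⊆ (Finset.univ.filter (fun u : Finset (Fin k) => u.Nonempty)).biUnion CylT := by
    intro t ht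
    obtain ⟨htP, u, hu, hinv⟩ := hCy t ht
    simp only [Finset.mem_biUnion]
    refine ⟨u, by simp [hu], ?_⟩
    rw [hCylT]
    simp only [Finset.mem_filter]
    exact ⟨ht, hinv⟩
  refine le_trans (Finset.card_le_card hsub) (le_trans Finset.card_biUnion_le ?_)
  calc (∑ u ∈ Finset.univ.filter (fun u : Finset (Fin k) => u.Nonempty), (CylT u).card)
      ≤ ∑ u ∈ Finset.univ.filter (fun u : Finset (Fin k) => u.Nonempty), 2 ^ (m ^ (k-1)) := by
        apply Finset.sum_le_sum
        intro u hu
        exact per_u u (Finset.mem_filter.mp hu).2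
    _ ≤ 2 ^ k * 2 ^ (m ^ (k-1)) := by
        rw [Finset.sum_const, smul_eq_mul]
        apply Nat.mul_le_mul_right
        calc (Finset.univ.filter (fun u : Finset (Fin k) => u.Nonempty)).card
            ≤ (Finset.univ : Finset (Finset (Fin k))).card := Finset.card_filter_le _ _
          _ = 2 ^ k := by simp

end Aux

set_option maxHeartbeats 2000000 in
/-- If `F` (on a product of finite sets) satisfies the `VC_k` packing lemma with bound
`N` uniformly over all probability measures — every `T ∈ F` is `ε`-approximated by a
Boolean combination of `N` fixed sets `S j ∈ F` and at most `N` cylinders over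
lower-arity fibers of `T, S 1, ..., S N` — and `ε < 1/2`, then every shattered box of
side `m` satisfies `m ^ k ≤ g(N, ε)` for a bound `g` depending only on `N, ε` (and `k`);
hence `F` has finite `VC_k`-dimension. -/
theorem uniform_packing_implies_finite_VC (k : ℕ) (hk : 1 ≤ k) (N : ℕ)
    (ε : ℝ) (hε0 : 0 < ε) (hε : ε < 1 / 2) :
    ∃ g : ℕ, ∀ (V : Fin k → Type u) [∀ i, Fintype (V i)]
      (F : Set (Set (∀ i, V i))),
      (∀ (instM : ∀ i, MeasurableSpace (V i)) (μ : ∀ i, Measure (V i)),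
        (∀ i, IsProbabilityMeasure (μ i)) →
        ∃ S : Fin N → Set (∀ i, V i), (∀ j, S j ∈ F) ∧
          ∀ T ∈ F, ∃ (C : Fin N → Set (∀ i, V i)) (D : Set (∀ i, V i)),
            (∀ j, IsFiberCylinder T (C j) ∨ ∃ j', IsFiberCylinder (S j') (C j)) ∧
            BooleanComb (Set.range S ∪ Set.range C) D ∧
            Measure.pi μ (symmDiff T D) ≤ ENNReal.ofReal ε) →
      (∀ (m : ℕ) (A : ∀ i, Set (V i)), (∀ i, (A i).ncard = m) →
        ShattersBox F A → m ^ k ≤ g) ∧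
      (∃ d : ℕ, ¬ VCge F d) := by
  classical
  have hε2 : ε < 1/2 := hε
  set L : ℝ := Real.log 2 + ε * Real.log ε + (1 - ε) * Real.log (1 - ε) with hLdef
  have hL : 0 < L := entropy_gap_pos hε0 hε2
  clear_value L
  have hlog2 : (0:ℝ) < Real.log 2 := Real.log_pos (by norm_num)
  set c₀ : ℕ := 2 ^ N * 2 ^ N + k * N with hc₀
  set m₁ : ℕ := ⌈(2 * N * Real.log 2) / L⌉₊ + 1 with hm₁
  set g₁ : ℕ := ⌈(2 * c₀ * Real.log 2) / L⌉₊ with hg₁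
  refine ⟨max (m₁ ^ k) g₁, ?_⟩
  intro V instV F hpack
  have main : ∀ (m : ℕ) (A : ∀ i, Set (V i)), (∀ i, (A i).ncard = m) →
      ShattersBox F A → m ^ k ≤ max (m₁ ^ k) g₁ := by
    intro m A hcard hshat
    rcases Nat.eq_zero_or_pos m with rfl | hm
    · rw [Nat.zero_pow (by omega)]
      exact Nat.zero_le _
    letI instM : ∀ i, MeasurableSpace (V i) := fun _ => ⊤
    haveI instMSC : ∀ i, MeasurableSingletonClass (V i) :=
      fun i => ⟨fun x => MeasurableSpace.measurableSet_top⟩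
    set sA : ∀ i, Finset (V i) := fun i => (A i).toFinite.toFinset with hsA
    have hsAcard : ∀ i, (sA i).card = m := by
      intro i
      rw [hsA]
      rw [← Set.ncard_eq_toFinset_card (A i) (A i).toFinite]
      exact hcard i
    have hsAne : ∀ i, (sA i).Nonempty := by
      intro i
      rw [← Finset.card_pos, hsAcard i]
      exact hm
    set P : Finset (∀ i, V i) := Fintype.piFinset sA with hPdef
    have hPcard : P.card = m ^ k := by
      rw [hPdef, Fintype.card_piFinset]
      calc (∏ i, (sA i).card) = ∏ _i : Fin k, m := Finset.prod_congr rfl (fun i _ => hsAcard i)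
        _ = m ^ k := by rw [Finset.prod_const, Finset.card_univ, Fintype.card_fin]
    have hPbox : ∀ x, x ∈ P ↔ x ∈ pibox A := by
      intro x
      rw [hPdef, Fintype.mem_piFinset]
      constructor
      · intro h i; have := h i; rw [hsA, Set.Finite.mem_toFinset] at this; exact this
      · intro h i; rw [hsA, Set.Finite.mem_toFinset]; exact h i
    set μ : ∀ i, Measure (V i) := fun i => ((sA i).card : ℝ≥0∞)⁻¹ • ∑ a ∈ sA i, Measure.dirac a
      with hμ
    have hprob : ∀ i, IsProbabilityMeasure (μ i) := fun i => uniform_isProb _ (hsAne i)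
    obtain ⟨S, hSF, happrox⟩ := hpack instM μ hprob
    set n : ℕ := m ^ k with hn
    set r : ℕ := ⌊ε * (n:ℝ)⌋₊ with hr
    have hrn : r ≤ n := by
      rw [hr]
      calc ⌊ε * (n:ℝ)⌋₊ ≤ ⌊(n:ℝ)⌋₊ := by
            apply Nat.floor_le_floor
            nlinarith [Nat.cast_nonneg (α := ℝ) n]
        _ = n := Nat.floor_natCast n
    -- the candidate approximating traces
    set Cyl : Finset (Finset (∀ i, V i)) :=
      P.powerset.filter (fun t => ∃ u : Finset (Fin k), u.Nonempty ∧
        ∀ x ∈ P, ∀ y ∈ P, (∀ i, i ∉ u → x i = y i) → (x ∈ t ↔ y ∈ t)) with hCyl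
    set Df : ((((Fin N → Bool) × (Fin N → Bool)) → Bool) × (Fin N → Finset (∀ i, V i)))
        → Finset (∀ i, V i) := fun q =>
      P.filter (fun x => q.1 (fun j => decide (x ∈ S j), fun j => decide (x ∈ q.2 j)) = true)
      with hDf
    set 𝒟 : Finset (Finset (∀ i, V i)) :=
      Finset.image Df (Finset.univ ×ˢ Fintype.piFinset (fun _ : Fin N => Cyl)) with h𝒟
    have hDsub : ∀ d ∈ 𝒟, d ⊆ P := by
      intro d hd
      rw [h𝒟] at hd
      obtain ⟨q, _, rfl⟩ := Finset.mem_image.mp hd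
      exact Finset.filter_subset _ _
    -- each subset of the box is r-close to some member of 𝒟
    have happroxB : ∀ B ∈ P.powerset, ∃ d ∈ 𝒟, (symmDiff B d).card ≤ r := by
      intro B hB
      have hBP : B ⊆ P := Finset.mem_powerset.mp hB
      have hBbox : (↑B : Set (∀ i, V i)) ⊆ pibox A := by
        intro x hx
        exact (hPbox x).mp (hBP hx)
      obtain ⟨T, hTF, hTeq⟩ := hshat ↑B hBbox
      obtain ⟨C, D, hCylC, hDbc, hmeas⟩ := happrox T hTF
      obtain ⟨Φ, hΦ⟩ := booleanComb_pattern S C D hDbc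
      set d : Finset (∀ i, V i) :=
        P.filter (fun x => Φ (fun j => decide (x ∈ S j),
          fun j => decide (x ∈ P.filter (· ∈ C j))) = true) with hd
      have hdmem : d ∈ 𝒟 := by
        rw [h𝒟]
        apply Finset.mem_image.mpr
        refine ⟨(Φ, fun j => P.filter (· ∈ C j)), ?_, rfl⟩
        rw [Finset.mem_product]
        refine ⟨Finset.mem_univ _, ?_⟩
        rw [Fintype.mem_piFinset]
        intro j
        rw [hCyl]
        simp only [Finset.mem_filter]
        refine ⟨Finset.mem_powerset.mpr (Finset.filter_subset _ _), ?_⟩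
        obtain ⟨u, a, E, hu, hE⟩ :
            ∃ (u : Finset (Fin k)) (a : ∀ i : u, V i) (E : Set (∀ i, V i)), u.Nonempty ∧
              (C j) = {v | (fun i : Fin k => if h : i ∈ u then a ⟨i, h⟩ else v i) ∈ E} := by
          rcases hCylC j with ⟨u, a, hu, hCeq⟩ | ⟨j', u, a, hu, hCeq⟩
          · exact ⟨u, a, T, hu, hCeq⟩
          · exact ⟨u, a, S j', hu, hCeq⟩
        refine ⟨u, hu, ?_⟩
        intro x hx y hy hagree
        have hsubeq : (fun i : Fin k => if h : i ∈ u then a ⟨i, h⟩ else x i)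
            = (fun i : Fin k => if h : i ∈ u then a ⟨i, h⟩ else y i) := by
          funext i
          by_cases h : i ∈ u
          · simp [h]
          · simp [h, hagree i h]
        simp only [Finset.mem_filter, hE, Set.mem_setOf_eq, hsubeq]
        constructor
        · intro h; exact ⟨hy, h.2⟩
        · intro h; exact ⟨hx, h.2⟩
      refine ⟨d, hdmem, ?_⟩
      -- B Δ d is contained in the trace of T Δ D
      have hstep : symmDiff B d ⊆ P.filter (· ∈ symmDiff T D) := by
        intro x hx
        have hxP : x ∈ P := by
          rw [Finset.mem_symmDiff] at hx
          rcases hx with ⟨h1, _⟩ | ⟨h1, _⟩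
          · exact hBP h1
          · exact hDsub d hdmem h1
        have hBT : x ∈ B ↔ x ∈ T := by
          constructor
          · intro h
            have : x ∈ (↑B : Set (∀ i, V i)) := h
            rw [hTeq] at this
            exact this.2
          · intro h
            have : x ∈ (↑B : Set (∀ i, V i)) := by
              rw [hTeq]
              exact ⟨(hPbox x).mp hxP, h⟩
            exact this
        have hdD : x ∈ d ↔ x ∈ D := by
          have hdec : (fun j => decide (x ∈ P.filter (· ∈ C j)))
              = (fun j => decide (x ∈ C j)) := by
            funext j
            apply decide_eq_decide.mpr
            rw [Finset.mem_filter]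
            exact ⟨fun h => h.2, fun h => ⟨hxP, h⟩⟩
          have h1 : x ∈ d ↔ (x ∈ P ∧ Φ (fun j => decide (x ∈ S j),
              fun j => decide (x ∈ P.filter (· ∈ C j))) = true) := by
            rw [hd]; exact Finset.mem_filter
          rw [hdec] at h1
          constructor
          · intro hxd
            have h2 := (h1.mp hxd).2
            rw [hΦ]
            exact h2
          · intro hxD
            apply h1.mpr
            refine ⟨hxP, ?_⟩
            rw [hΦ] at hxD
            exact hxD
        rw [Finset.mem_filter]
        refine ⟨hxP, ?_⟩
        rw [Finset.mem_symmDiff] at hx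
        rw [Set.mem_symmDiff]
        rcases hx with ⟨h1, h2⟩ | ⟨h1, h2⟩
        · exact Or.inl ⟨hBT.mp h1, fun hc => h2 (hdD.mpr hc)⟩
        · exact Or.inr ⟨hdD.mp h1, fun hc => h2 (hBT.mpr hc)⟩
      have hcard2 : ((P.filter (· ∈ symmDiff T D)).card : ℝ≥0∞) * (((m:ℝ≥0∞))^k)⁻¹ ≤
          ENNReal.ofReal ε := by
        have hle := le_measure_pi_uniform (I := instM) sA hsAne (symmDiff T D)
        rw [← hPdef, ← hμ] at hle
        have hprod : (∏ _i : Fin k, ((m:ℝ≥0∞))⁻¹) = (((m:ℝ≥0∞))^k)⁻¹ := by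
          rw [Finset.prod_const, Finset.card_univ, Fintype.card_fin, ← ENNReal.inv_pow]
        have hprod2 : (∏ i, ((sA i).card : ℝ≥0∞)⁻¹) = (((m:ℝ≥0∞))^k)⁻¹ := by
          rw [← hprod]
          apply Finset.prod_congr rfl
          intro i _
          rw [hsAcard i]
        rw [hprod2] at hle
        exact le_trans hle hmeas
      have hcard3 : (P.filter (· ∈ symmDiff T D)).card ≤ r := by
        have hm0 : ((m:ℝ≥0∞))^k ≠ 0 := by
          simp only [ne_eq, pow_eq_zero_iff', Nat.cast_eq_zero]
          intro h
          omega
        have hmT : ((m:ℝ≥0∞))^k ≠ ⊤ := by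
          apply ENNReal.pow_ne_top
          exact ENNReal.natCast_ne_top m
        have h2 : ((P.filter (· ∈ symmDiff T D)).card : ℝ≥0∞) ≤
            ENNReal.ofReal ε * ((m:ℝ≥0∞))^k := by
          rw [← ENNReal.div_le_iff hm0 hmT]
          rw [ENNReal.div_eq_inv_mul, mul_comm]
          exact hcard2
        have h3 : ((m:ℝ≥0∞))^k = ENNReal.ofReal ((m:ℝ)^k) := by
          rw [ENNReal.ofReal_pow (by positivity), ENNReal.ofReal_natCast]
        rw [h3, ← ENNReal.ofReal_mul hε0.le] at h2
        have h4 : (((P.filter (· ∈ symmDiff T D)).card : ℕ) : ℝ) ≤ ε * (m:ℝ)^k := by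
          have h5 : ((((P.filter (· ∈ symmDiff T D)).card : ℕ) : ℝ≥0∞)) =
              ENNReal.ofReal (((P.filter (· ∈ symmDiff T D)).card : ℕ) : ℝ) := by
            rw [ENNReal.ofReal_natCast]
          rw [h5] at h2
          rw [← ENNReal.ofReal_le_ofReal_iff (by positivity)]
          exact h2
        rw [hr]
        apply Nat.le_floor
        have : ((n:ℕ):ℝ) = (m:ℝ)^k := by rw [hn]; push_cast; ring
        rw [this]
        exact h4
      calc (symmDiff B d).card ≤ (P.filter (· ∈ symmDiff T D)).card :=
            Finset.card_le_card hstep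
        _ ≤ r := hcard3
    -- counting
    have hcount : 2 ^ n ≤ 𝒟.card * ∑ i ∈ Finset.range (r+1), n.choose i := by
      have := card_le_of_approx P 𝒟 r hDsub happroxB
      rwa [hPcard] at this
    have hCylcard : Cyl.card ≤ 2 ^ k * 2 ^ (m ^ (k - 1)) := by
      apply cylTraces_card sA m hm hsAcard
      intro t ht
      rw [hCyl] at ht
      simp only [Finset.mem_filter] at ht
      obtain ⟨htP, u, hu, hinv⟩ := ht
      rw [← hPdef]
      exact ⟨Finset.mem_powerset.mp htP, u, hu, hinv⟩
    have hΦcard : (Finset.univ : Finset ((((Fin N → Bool) × (Fin N → Bool)) → Bool))).card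
        = 2 ^ (2 ^ N * 2 ^ N) := by
      rw [Finset.card_univ, Fintype.card_fun]
      simp
    have hpiCyl : (Fintype.piFinset (fun _ : Fin N => Cyl)).card = Cyl.card ^ N := by
      rw [Fintype.card_piFinset, Finset.prod_const, Finset.card_univ, Fintype.card_fin]
    have hDcard : 𝒟.card ≤ 2 ^ (2^N * 2^N) * (2^k * 2^(m^(k-1)))^N := by
      rw [h𝒟]
      refine le_trans (Finset.card_image_le) ?_
      rw [Finset.card_product, hΦcard, hpiCyl]
      exact Nat.mul_le_mul_left _ (Nat.pow_le_pow_left hCylcard N)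
    set M' : ℕ := m ^ (k-1) with hM'
    -- pass to the reals
    set c₁ : ℕ := 2^N * 2^N + (k + M') * N with hc₁
    have hcst : (2:ℕ) ^ (2^N * 2^N) * (2^k * 2^M')^N = 2 ^ c₁ := by
      have e1 : (2:ℕ)^k * 2^M' = 2^(k+M') := (pow_add 2 k M').symm
      have e2 : ((2:ℕ)^(k+M'))^N = 2^((k+M')*N) := (pow_mul 2 (k+M') N).symm
      have e3 : (2:ℕ)^(2^N*2^N) * 2^((k+M')*N) = 2^(2^N*2^N + (k+M')*N) := (pow_add 2 _ _).symm
      rw [e1, e2, e3, hc₁]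
    have hq0 : (0:ℝ) < ε ^ r * (1-ε) ^ (n-r) := by
      have : (0:ℝ) < 1 - ε := by linarith
      positivity
    have hreal : (2:ℝ)^n * (ε^r * (1-ε)^(n-r)) ≤ (2:ℝ)^c₁ := by
      have h1 : ((2:ℝ))^n ≤ ((𝒟.card : ℕ) : ℝ) *
          (∑ i ∈ Finset.range (r+1), (n.choose i : ℝ)) := by
        have := hcount
        have h2 := (Nat.cast_le (α := ℝ)).mpr this
        push_cast at h2 ⊢
        convert h2 using 2
      have h2 : ((𝒟.card : ℕ) : ℝ) ≤ (2:ℝ)^c₁ := by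
        have := le_trans hDcard (le_of_eq hcst)
        exact_mod_cast this
      have h3 := chernoff_sum hε0 hε2 n r hrn
      have hS0 : (0:ℝ) ≤ ∑ i ∈ Finset.range (r+1), (n.choose i : ℝ) := by positivity
      calc (2:ℝ)^n * (ε^r * (1-ε)^(n-r))
          ≤ (((𝒟.card : ℕ) : ℝ) * (∑ i ∈ Finset.range (r+1), (n.choose i : ℝ)))
            * (ε^r * (1-ε)^(n-r)) := by
            apply mul_le_mul_of_nonneg_right h1 hq0.le
        _ = ((𝒟.card : ℕ) : ℝ) *
            ((∑ i ∈ Finset.range (r+1), (n.choose i : ℝ)) * (ε^r * (1-ε)^(n-r))) := by ring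
        _ ≤ (2:ℝ)^c₁ * 1 := by
            apply mul_le_mul h2 h3 (by positivity) (by positivity)
        _ = (2:ℝ)^c₁ := by ring
    have h1ε : (0:ℝ) < 1 - ε := by linarith
    have hlog : (n:ℝ) * Real.log 2 + (r:ℝ) * Real.log ε + ((n:ℝ) - (r:ℝ)) * Real.log (1-ε)
        ≤ (c₁:ℝ) * Real.log 2 := by
      have hLHS : (0:ℝ) < (2:ℝ)^n * (ε^r * (1-ε)^(n-r)) := by positivity
      have := Real.log_le_log hLHS hreal
      rw [Real.log_mul (by positivity) (by positivity),
        Real.log_mul (by positivity) (by positivity),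
        Real.log_pow, Real.log_pow, Real.log_pow, Real.log_pow] at this
      have hcast : ((n - r : ℕ) : ℝ) = (n:ℝ) - (r:ℝ) := by
        rw [Nat.cast_sub hrn]
      rw [hcast] at this
      linarith
    have hfloor : (r:ℝ) ≤ ε * (n:ℝ) := by
      rw [hr]
      exact Nat.floor_le (by positivity)
    have hlogε : Real.log ε ≤ Real.log (1-ε) := by
      apply Real.log_le_log hε0
      linarith
    have hkey : (n:ℝ) * L ≤ (c₁:ℝ) * Real.log 2 := by
      have hprod : 0 ≤ (ε * (n:ℝ) - (r:ℝ)) * (Real.log (1-ε) - Real.log ε) :=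
        mul_nonneg (by linarith) (by linarith)
      rw [hLdef]
      nlinarith [hlog]
    have hc₁L : (c₁:ℝ) = (c₀:ℝ) + (M':ℝ) * (N:ℝ) := by
      rw [hc₁, hc₀]
      push_cast
      ring
    have hnM : (n:ℝ) = (M':ℝ) * (m:ℝ) := by
      rw [hn, hM']
      have : m ^ k = m ^ (k-1) * m := by
        conv_lhs => rw [← Nat.sub_add_cancel hk]
        rw [pow_succ]
      rw [this]
      push_cast
      ring
    by_cases hcase : m ≤ m₁
    · refine le_trans ?_ (le_max_left _ _)
      exact Nat.pow_le_pow_left hcase k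
    · push_neg at hcase
      refine le_trans ?_ (le_max_right _ _)
      have hmm : (m₁ : ℝ) < (m : ℝ) := by exact_mod_cast hcase
      have hx : 2 * (N:ℝ) * Real.log 2 / L < (m₁:ℝ) := by
        rw [hm₁]
        push_cast
        have := Nat.le_ceil (2 * (N:ℝ) * Real.log 2 / L)
        linarith
      have hNm : 2 * (N:ℝ) * Real.log 2 < (m:ℝ) * L := by
        rw [div_lt_iff₀ hL] at hx
        nlinarith
      have hM'0 : (0:ℝ) ≤ (M':ℝ) := by positivity
      have hstep2 : (M':ℝ) * (N:ℝ) * Real.log 2 ≤ (n:ℝ) * L / 2 := by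
        rw [hnM]
        have : (N:ℝ) * Real.log 2 ≤ (m:ℝ) * L / 2 := by linarith
        calc (M':ℝ) * (N:ℝ) * Real.log 2 = (M':ℝ) * ((N:ℝ) * Real.log 2) := by ring
          _ ≤ (M':ℝ) * ((m:ℝ) * L / 2) := by
              apply mul_le_mul_of_nonneg_left this hM'0
          _ = (M':ℝ) * (m:ℝ) * L / 2 := by ring
      have hfin : (n:ℝ) * L / 2 ≤ (c₀:ℝ) * Real.log 2 := by
        have := hkey
        rw [hc₁L] at this
        nlinarith
      have hng : (n:ℝ) ≤ 2 * (c₀:ℝ) * Real.log 2 / L := by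
        rw [le_div_iff₀ hL]
        nlinarith
      have : n ≤ g₁ := by
        rw [hg₁]
        have h6 := Nat.le_ceil (2 * (c₀:ℝ) * Real.log 2 / L)
        have : (n:ℝ) ≤ (⌈2 * (c₀:ℝ) * Real.log 2 / L⌉₊ : ℝ) := le_trans hng h6
        exact_mod_cast this
      exact this
  refine ⟨main, ?_⟩
  refine ⟨max (m₁ ^ k) g₁ + 1, ?_⟩
  intro hvc
  obtain ⟨A, hA, hshat⟩ := hvc
  have h1 := main _ A (fun i => (hA i).2) hshat
  have h2 : max (m₁ ^ k) g₁ + 1 ≤ (max (m₁ ^ k) g₁ + 1) ^ k :=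
    Nat.le_self_pow (by omega) _
  omega
end
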